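/- Let L be a localization functor on XMod that is right exact, i.e. for every short exact sequence 1 → N →(κ) T →(α) Q → 1 of crossed modules, the sequence LN →(Lκ) LT →(Lα) LQ → 1 is exact (Lα is a regular epimorphism and the image of Lκ is a kernel of Lα). Then L is admissible for the class of regular epimorphisms. -/

import Mathlib

set_option linter.unusedVariables false

/-- A crossed module of groups `(M, G, d)` with `G` acting on `M`. -/
structure XMod : Type 1 where
  M : Type
  G : Type
  [grpM : Group M]
  [grpG : Group G]
  act : G →* MulAut M
  d : M →* G
  act_d : ∀ (b : G) (t : M), d (act b t) = b * d t * b⁻¹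
  peiffer : ∀ (t s : M), act (d t) s = t * s * t⁻¹

attribute [instance] XMod.grpM XMod.grpG

/-- A morphism of crossed modules. -/
structure XModHom (N T : XMod) where
  f1 : N.M →* T.M
  f2 : N.G →* T.G
  comm_d : ∀ n, T.d (f1 n) = f2 (N.d n)
  equiv : ∀ (b : N.G) (n : N.M), f1 (N.act b n) = T.act (f2 b) (f1 n)

namespace XModHom

theorem ext {N T : XMod} {f g : XModHom N T} (h1 : f.f1 = g.f1) (h2 : f.f2 = g.f2) :
    f = g := by
  cases f; cases g; cases h1; cases h2; rfl

/-- The identity morphism. -/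
def id (T : XMod) : XModHom T T :=
  ⟨MonoidHom.id _, MonoidHom.id _, fun _ => rfl, fun _ _ => rfl⟩

/-- Composition of morphisms of crossed modules. -/
def comp {A B C : XMod} (g : XModHom B C) (f : XModHom A B) : XModHom A C where
  f1 := g.f1.comp f.f1
  f2 := g.f2.comp f.f2
  comm_d := by intro n; simp [MonoidHom.comp_apply, g.comm_d, f.comm_d]
  equiv := by intro b n; simp [MonoidHom.comp_apply, f.equiv, g.equiv]

/-- The trivial morphism of crossed modules. -/
def triv (A B : XMod) : XModHom A B where
  f1 := 1
  f2 := 1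
  comm_d := by intro n; simp
  equiv := by intro b n; simp

/-- A morphism of crossed modules is an isomorphism if it has a two-sided inverse. -/
def IsIso {A B : XMod} (f : XModHom A B) : Prop :=
  ∃ g : XModHom B A, comp g f = id A ∧ comp f g = id B

/-- Regular epimorphisms of crossed modules are exactly the componentwise
surjective morphisms. -/
def RegEpi {A B : XMod} (f : XModHom A B) : Prop :=
  Function.Surjective f.f1 ∧ Function.Surjective f.f2

/-- `κ` is a kernel of `α` (in the categorical sense). -/
def IsKernelOf {N T Q : XMod} (κ : XModHom N T) (α : XModHom T Q) : Prop :=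
  comp α κ = triv N Q ∧
    ∀ (X : XMod) (u : XModHom X T), comp α u = triv X Q →
      ∃! v : XModHom X N, comp κ v = u

end XModHom

/-- `1 → N → T → Q → 1` is a short exact sequence of crossed modules. -/
def ShortExact {N T Q : XMod} (κ : XModHom N T) (α : XModHom T Q) : Prop :=
  XModHom.IsKernelOf κ α ∧ XModHom.RegEpi α
/-- A localization functor (coaugmented idempotent functor) on `XMod`. -/
structure LocalizationFunctor where
  obj : XMod → XMod
  map : ∀ {A B : XMod}, XModHom A B → XModHom (obj A) (obj B)
  map_id : ∀ A : XMod, map (XModHom.id A) = XModHom.id (obj A)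
  map_comp : ∀ {A B C : XMod} (f : XModHom A B) (g : XModHom B C),
    map (XModHom.comp g f) = XModHom.comp (map g) (map f)
  ell : ∀ A : XMod, XModHom A (obj A)
  natural : ∀ {A B : XMod} (f : XModHom A B),
    XModHom.comp (ell B) f = XModHom.comp (map f) (ell A)
  iso_ell_obj : ∀ A : XMod, XModHom.IsIso (ell (obj A))
  iso_map_ell : ∀ A : XMod, XModHom.IsIso (map (ell A))

namespace LocalizationFunctor

/-- A crossed module is `L`-local if its coaugmentation is an isomorphism. -/
def IsLocal (L : LocalizationFunctor) (X : XMod) : Prop :=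
  XModHom.IsIso (L.ell X)

/-- `L` is a regular-epi localization if every coaugmentation morphism is a
regular epimorphism. -/
def RegEpiLoc (L : LocalizationFunctor) : Prop :=
  ∀ X : XMod, XModHom.RegEpi (L.ell X)

/-- A short exact sequence is `L`-flat if applying `L` yields a short exact sequence. -/
def LFlat (L : LocalizationFunctor) {N T Q : XMod} (κ : XModHom N T) (α : XModHom T Q) : Prop :=
  ShortExact (L.map κ) (L.map α)

end LocalizationFunctor
section Pullback

variable {T Q Q' : XMod} (α : XModHom T Q) (g : XModHom Q' Q)

/-- Level-1 part of the pullback `T ×_Q Q'`, computed componentwise. -/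
def pbM : Subgroup (T.M × Q'.M) where
  carrier := {p | α.f1 p.1 = g.f1 p.2}
  one_mem' := by simp
  mul_mem' := by
    intro a b ha hb
    simp only [Set.mem_setOf_eq, Prod.fst_mul, Prod.snd_mul, map_mul] at *
    rw [ha, hb]
  inv_mem' := by
    intro a ha
    simp only [Set.mem_setOf_eq, Prod.fst_inv, Prod.snd_inv, map_inv] at *
    rw [ha]

/-- Level-2 part of the pullback `T ×_Q Q'`, computed componentwise. -/
def pbG : Subgroup (T.G × Q'.G) where
  carrier := {p | α.f2 p.1 = g.f2 p.2}
  one_mem' := by simp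
  mul_mem' := by
    intro a b ha hb
    simp only [Set.mem_setOf_eq, Prod.fst_mul, Prod.snd_mul, map_mul] at *
    rw [ha, hb]
  inv_mem' := by
    intro a ha
    simp only [Set.mem_setOf_eq, Prod.fst_inv, Prod.snd_inv, map_inv] at *
    rw [ha]

theorem mem_pbM_iff (p : T.M × Q'.M) : p ∈ pbM α g ↔ α.f1 p.1 = g.f1 p.2 := Iff.rfl

theorem mem_pbG_iff (p : T.G × Q'.G) : p ∈ pbG α g ↔ α.f2 p.1 = g.f2 p.2 := Iff.rfl

theorem pb_act_mem {b : T.G × Q'.G} (hb : b ∈ pbG α g) {p : T.M × Q'.M}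
    (hp : p ∈ pbM α g) : (T.act b.1 p.1, Q'.act b.2 p.2) ∈ pbM α g := by
  have hb' : α.f2 b.1 = g.f2 b.2 := hb
  have hp' : α.f1 p.1 = g.f1 p.2 := hp
  show α.f1 (T.act b.1 p.1) = g.f1 (Q'.act b.2 p.2)
  rw [α.equiv, g.equiv, hb', hp']

theorem XMod.act_inv_act (X : XMod) (b : X.G) (t : X.M) :
    X.act b⁻¹ (X.act b t) = t := by
  rw [← MulAut.mul_apply, ← map_mul, inv_mul_cancel, map_one, MulAut.one_apply]

theorem XMod.act_act_inv (X : XMod) (b : X.G) (t : X.M) :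
    X.act b (X.act b⁻¹ t) = t := by
  rw [← MulAut.mul_apply, ← map_mul, mul_inv_cancel, map_one, MulAut.one_apply]

/-- The action of an element of the pullback on the level-1 part, as a group
automorphism. -/
def pbActEquiv (b : ↥(pbG α g)) : ↥(pbM α g) ≃* ↥(pbM α g) where
  toFun p := ⟨(T.act b.1.1 p.1.1, Q'.act b.1.2 p.1.2), pb_act_mem α g b.2 p.2⟩
  invFun p := ⟨(T.act b.1.1⁻¹ p.1.1, Q'.act b.1.2⁻¹ p.1.2),
    pb_act_mem α g ((pbG α g).inv_mem b.2) p.2⟩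
  left_inv p := by
    apply Subtype.ext
    exact Prod.ext (T.act_inv_act _ _) (Q'.act_inv_act _ _)
  right_inv p := by
    apply Subtype.ext
    exact Prod.ext (T.act_act_inv _ _) (Q'.act_act_inv _ _)
  map_mul' p q := by
    apply Subtype.ext
    exact Prod.ext (map_mul _ _ _) (map_mul _ _ _)

/-- The pullback `T ×_Q Q'` of `α : T → Q` along `g : Q' → Q`, computed
componentwise. -/
def pbXMod : XMod where
  M := ↥(pbM α g)
  G := ↥(pbG α g)
  act :=
    { toFun := pbActEquiv α g
      map_one' := by
        apply MulEquiv.ext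
        intro p
        apply Subtype.ext
        apply Prod.ext
        · show T.act (1 : ↥(pbG α g)).1.1 p.1.1 = p.1.1
          simp
        · show Q'.act (1 : ↥(pbG α g)).1.2 p.1.2 = p.1.2
          simp
      map_mul' := by
        intro b c
        apply MulEquiv.ext
        intro p
        apply Subtype.ext
        apply Prod.ext
        · show T.act (b * c).1.1 p.1.1 = T.act b.1.1 (T.act c.1.1 p.1.1)
          simp [map_mul]
        · show Q'.act (b * c).1.2 p.1.2 = Q'.act b.1.2 (Q'.act c.1.2 p.1.2)
          simp [map_mul] }
  d :=
    { toFun := fun p => ⟨(T.d p.1.1, Q'.d p.1.2), by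
        have hp : α.f1 p.1.1 = g.f1 p.1.2 := p.2
        show α.f2 (T.d p.1.1) = g.f2 (Q'.d p.1.2)
        rw [← α.comm_d, ← g.comm_d, hp]⟩
      map_one' := by
        apply Subtype.ext
        apply Prod.ext <;> simp
      map_mul' := by
        intro p q
        apply Subtype.ext
        apply Prod.ext <;> simp }
  act_d := by
    intro b p
    apply Subtype.ext
    apply Prod.ext
    · exact T.act_d _ _
    · exact Q'.act_d _ _
  peiffer := by
    intro p q
    apply Subtype.ext
    apply Prod.ext
    · exact T.peiffer _ _
    · exact Q'.peiffer _ _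

/-- First projection of the pullback. -/
def pbFst : XModHom (pbXMod α g) T where
  f1 := (MonoidHom.fst T.M Q'.M).comp (pbM α g).subtype
  f2 := (MonoidHom.fst T.G Q'.G).comp (pbG α g).subtype
  comm_d := fun _ => rfl
  equiv := fun _ _ => rfl

/-- Second projection of the pullback. -/
def pbSnd : XModHom (pbXMod α g) Q' where
  f1 := (MonoidHom.snd T.M Q'.M).comp (pbM α g).subtype
  f2 := (MonoidHom.snd T.G Q'.G).comp (pbG α g).subtype
  comm_d := fun _ => rfl
  equiv := fun _ _ => rfl

end Pullback
section PullbackMaps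

variable {N T Q Q' : XMod}

/-- The induced morphism from the kernel `N` into the pullback `T ×_Q Q'`. -/
def pbIn (κ : XModHom N T) (α : XModHom T Q) (g : XModHom Q' Q)
    (h : XModHom.comp α κ = XModHom.triv N Q) : XModHom N (pbXMod α g) where
  f1 :=
    { toFun := fun n => ⟨(κ.f1 n, 1), by
        show α.f1 (κ.f1 n) = g.f1 1
        have := congrArg XModHom.f1 h
        have h' : α.f1 (κ.f1 n) = 1 := DFunLike.congr_fun this n
        rw [h', map_one]⟩
      map_one' := by
        apply Subtype.ext
        apply Prod.ext <;> simp <;> first | rfl | exact map_one _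
      map_mul' := by
        intro a b
        apply Subtype.ext
        show (κ.f1 (a * b), (1 : Q'.M)) = (κ.f1 a, (1 : Q'.M)) * (κ.f1 b, (1 : Q'.M))
        simp [Prod.ext_iff, map_mul] }
  f2 :=
    { toFun := fun n => ⟨(κ.f2 n, 1), by
        show α.f2 (κ.f2 n) = g.f2 1
        have := congrArg XModHom.f2 h
        have h' : α.f2 (κ.f2 n) = 1 := DFunLike.congr_fun this n
        rw [h', map_one]⟩
      map_one' := by
        apply Subtype.ext
        apply Prod.ext <;> simp <;> first | rfl | exact map_one _
      map_mul' := by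
        intro a b
        apply Subtype.ext
        show (κ.f2 (a * b), (1 : Q'.G)) = (κ.f2 a, (1 : Q'.G)) * (κ.f2 b, (1 : Q'.G))
        simp [Prod.ext_iff, map_mul] }
  comm_d := by
    intro n
    apply Subtype.ext
    apply Prod.ext
    · exact κ.comm_d n
    · show Q'.d (1 : Q'.M) = 1
      simp
  equiv := by
    intro b n
    apply Subtype.ext
    apply Prod.ext
    · exact κ.equiv b n
    · show (1 : Q'.M) = Q'.act 1 1
      simp

/-- The induced morphism into the pullback `T ×_Q Q'` from an object mapping
trivially to `Q` through the second leg. -/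
def pbInR (α : XModHom T Q) (g : XModHom Q' Q) {X : XMod} (u : XModHom X Q')
    (h : XModHom.comp g u = XModHom.triv X Q) : XModHom X (pbXMod α g) where
  f1 :=
    { toFun := fun n => ⟨(1, u.f1 n), by
        show α.f1 1 = g.f1 (u.f1 n)
        have := congrArg XModHom.f1 h
        have h' : g.f1 (u.f1 n) = 1 := DFunLike.congr_fun this n
        rw [h', map_one]⟩
      map_one' := by
        apply Subtype.ext
        apply Prod.ext <;> simp <;> first | rfl | exact map_one _
      map_mul' := by
        intro a b
        apply Subtype.ext
        show ((1 : T.M), u.f1 (a * b)) = ((1 : T.M), u.f1 a) * ((1 : T.M), u.f1 b)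
        simp [Prod.ext_iff, map_mul] }
  f2 :=
    { toFun := fun n => ⟨(1, u.f2 n), by
        show α.f2 1 = g.f2 (u.f2 n)
        have := congrArg XModHom.f2 h
        have h' : g.f2 (u.f2 n) = 1 := DFunLike.congr_fun this n
        rw [h', map_one]⟩
      map_one' := by
        apply Subtype.ext
        apply Prod.ext <;> simp <;> first | rfl | exact map_one _
      map_mul' := by
        intro a b
        apply Subtype.ext
        show ((1 : T.G), u.f2 (a * b)) = ((1 : T.G), u.f2 a) * ((1 : T.G), u.f2 b)
        simp [Prod.ext_iff, map_mul] }
  comm_d := by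
    intro n
    apply Subtype.ext
    apply Prod.ext
    · show T.d (1 : T.M) = 1
      simp
    · exact u.comm_d n
  equiv := by
    intro b n
    apply Subtype.ext
    apply Prod.ext
    · show (1 : T.M) = T.act 1 1
      simp
    · exact u.equiv b n

/-- The morphism of pullbacks `T ×_Q Q' → E ×_Q Q'` induced by `f : T → E`
with `p ∘ f = α`. -/
def pbMapL {E : XMod} (α : XModHom T Q) (p : XModHom E Q) (g : XModHom Q' Q)
    (f : XModHom T E) (hpf : XModHom.comp p f = α) :
    XModHom (pbXMod α g) (pbXMod p g) where
  f1 :=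
    { toFun := fun w => ⟨(f.f1 w.1.1, w.1.2), by
        show p.f1 (f.f1 w.1.1) = g.f1 w.1.2
        have h' : p.f1 (f.f1 w.1.1) = α.f1 w.1.1 :=
          DFunLike.congr_fun (congrArg XModHom.f1 hpf) w.1.1
        rw [h']
        exact w.2⟩
      map_one' := by
        apply Subtype.ext
        apply Prod.ext <;> simp <;> first | rfl | exact map_one _
      map_mul' := by
        intro a b
        apply Subtype.ext
        apply Prod.ext
        · exact map_mul f.f1 a.1.1 b.1.1
        · rfl }
  f2 :=
    { toFun := fun w => ⟨(f.f2 w.1.1, w.1.2), by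
        show p.f2 (f.f2 w.1.1) = g.f2 w.1.2
        have h' : p.f2 (f.f2 w.1.1) = α.f2 w.1.1 :=
          DFunLike.congr_fun (congrArg XModHom.f2 hpf) w.1.1
        rw [h']
        exact w.2⟩
      map_one' := by
        apply Subtype.ext
        apply Prod.ext <;> simp <;> first | rfl | exact map_one _
      map_mul' := by
        intro a b
        apply Subtype.ext
        apply Prod.ext
        · exact map_mul f.f2 a.1.1 b.1.1
        · rfl }
  comm_d := by
    intro w
    apply Subtype.ext
    apply Prod.ext
    · exact f.comm_d _
    · rfl
  equiv := by
    intro b w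
    apply Subtype.ext
    apply Prod.ext
    · exact f.equiv _ _
    · rfl

end PullbackMaps

/-- A commuting square is a pullback square (categorical definition). -/
def IsPullbackSquare {P X Y Z : XMod} (p1 : XModHom P X) (p2 : XModHom P Y)
    (f : XModHom X Z) (h : XModHom Y Z) : Prop :=
  XModHom.comp f p1 = XModHom.comp h p2 ∧
    ∀ (W : XMod) (u : XModHom W X) (v : XModHom W Y),
      XModHom.comp f u = XModHom.comp h v →
        ∃! w : XModHom W P, XModHom.comp p1 w = u ∧ XModHom.comp p2 w = v

namespace LocalizationFunctor

/-- `L` is admissible for the class of regular epimorphisms: applying `L` to the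
pullback of a regular epimorphism `α : LT → LQ` along the coaugmentation
`ℓ^Q : Q → LQ` yields again a pullback square. -/
def Admissible (L : LocalizationFunctor) : Prop :=
  ∀ (T Q : XMod) (α : XModHom (L.obj T) (L.obj Q)), XModHom.RegEpi α →
    IsPullbackSquare (L.map (pbFst α (L.ell Q))) (L.map (pbSnd α (L.ell Q)))
      (L.map α) (L.map (L.ell Q))

/-- `L` is conditionally flat: the pullback of any `L`-flat short exact sequence
along any morphism is again `L`-flat. -/
def ConditionallyFlat (L : LocalizationFunctor) : Prop :=
  ∀ (N T Q : XMod) (κ : XModHom N T) (α : XModHom T Q) (hse : ShortExact κ α),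
    L.LFlat κ α →
      ∀ (Q' : XMod) (g : XModHom Q' Q),
        L.LFlat (pbIn κ α g hse.1.1) (pbSnd α g)

/-- A short exact sequence `1 → N → T → Q → 1` admits a fiberwise localization:
there is a short exact sequence `1 → LN → E → Q → 1` together with an
`L`-equivalence `T → E` compatible with the coaugmentation of `N`. -/
def AdmitsFiberwise (L : LocalizationFunctor) {N T Q : XMod} (κ : XModHom N T)
    (α : XModHom T Q) : Prop :=
  ∃ (E : XMod) (j : XModHom (L.obj N) E) (p : XModHom E Q) (e : XModHom T E),
    ShortExact j p ∧ XModHom.IsIso (L.map e) ∧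
      XModHom.comp e κ = XModHom.comp j (L.ell N) ∧ XModHom.comp p e = α

end LocalizationFunctor
section Kernel

variable {N T : XMod} (f : XModHom N T)

theorem ker_act_mem {b : N.G} (hb : b ∈ f.f2.ker) {n : N.M} (hn : n ∈ f.f1.ker) :
    N.act b n ∈ f.f1.ker := by
  have hb' : f.f2 b = 1 := hb
  have hn' : f.f1 n = 1 := hn
  show f.f1 (N.act b n) = 1
  rw [f.equiv, hb', hn', map_one]

/-- The automorphism of `ker f.f1` induced by an element of `ker f.f2`. -/
def kerActEquiv (b : ↥f.f2.ker) : ↥f.f1.ker ≃* ↥f.f1.ker where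
  toFun n := ⟨N.act b.1 n.1, ker_act_mem f b.2 n.2⟩
  invFun n := ⟨N.act b.1⁻¹ n.1, ker_act_mem f (f.f2.ker.inv_mem b.2) n.2⟩
  left_inv n := Subtype.ext (N.act_inv_act _ _)
  right_inv n := Subtype.ext (N.act_act_inv _ _)
  map_mul' n m := Subtype.ext (map_mul _ _ _)

/-- The kernel of a morphism of crossed modules, computed componentwise. -/
def kerXMod : XMod where
  M := ↥f.f1.ker
  G := ↥f.f2.ker
  act :=
    { toFun := kerActEquiv f
      map_one' := by
        apply MulEquiv.ext
        intro n
        apply Subtype.ext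
        show N.act (1 : ↥f.f2.ker).1 n.1 = n.1
        simp
      map_mul' := by
        intro b c
        apply MulEquiv.ext
        intro n
        apply Subtype.ext
        show N.act (b * c).1 n.1 = N.act b.1 (N.act c.1 n.1)
        simp [map_mul] }
  d :=
    { toFun := fun n => ⟨N.d n.1, by
        have hn : f.f1 n.1 = 1 := n.2
        show f.f2 (N.d n.1) = 1
        rw [← f.comm_d, hn, map_one]⟩
      map_one' := by
        apply Subtype.ext
        simp
      map_mul' := by
        intro a b
        apply Subtype.ext
        show N.d (a * b).1 = N.d a.1 * N.d b.1
        simp }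
  act_d := by
    intro b n
    apply Subtype.ext
    exact N.act_d _ _
  peiffer := by
    intro n m
    apply Subtype.ext
    exact N.peiffer _ _

/-- The inclusion of the kernel. -/
def kerIncl : XModHom (kerXMod f) N where
  f1 := f.f1.ker.subtype
  f2 := f.f2.ker.subtype
  comm_d := fun _ => rfl
  equiv := fun _ _ => rfl

end Kernel

/-- A crossed module is trivial if both underlying groups are trivial. -/
def XMod.IsTrivial (X : XMod) : Prop :=
  (∀ m : X.M, m = 1) ∧ ∀ b : X.G, b = 1

/-- `X` is `A`-null if the only morphism of crossed modules `A → X` is the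
trivial one. -/
def ANull (A X : XMod) : Prop :=
  ∀ φ : XModHom A X, φ = XModHom.triv A X

/-- `X` is `f`-local if precomposition with `f` is a bijection on morphisms
into `X`. -/
def FLocal {B C : XMod} (f : XModHom B C) (X : XMod) : Prop :=
  Function.Bijective fun φ : XModHom C X => XModHom.comp φ f

/-- The subgroup `[N₂, N₁]` of `N₁` generated by the elements `ᵇt·t⁻¹`. -/
def actCommutator (N : XMod) : Subgroup N.M :=
  Subgroup.closure {x | ∃ (b : N.G) (t : N.M), x = N.act b t * t⁻¹}

section NormalClosure

variable {A W : XMod} (φ : XModHom A W)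

/-- The level-2 part of the normal closure of the image of `φ`:
the normal closure of `φ₂(A₂)` in `W₂`. -/
def ncl2 : Subgroup W.G :=
  Subgroup.normalClosure (Set.range φ.f2)

/-- The level-1 part of the normal closure of the image of `φ`:
the subgroup `φ₁(A₁)^{W₂}·[φ₂(A₂)^{W₂}, W₁]` of `W₁`. -/
def ncl1 : Subgroup W.M :=
  Subgroup.closure
    ({x | ∃ (b : W.G) (m : A.M), x = W.act b (φ.f1 m)} ∪
      {x | ∃ s ∈ ncl2 φ, ∃ w : W.M, x = W.act s w * w⁻¹})

end NormalClosure

/-!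
Write `P = LT ×_{LQ} Q` with projections `π₁ : P → LT` and `π₂ : P → Q`. As `L ℓ^Q` is an
isomorphism, the image square is a pullback as soon as `L π₁` is an isomorphism. The kernel `K`
of `α` is a kernel of a morphism between local objects, hence local, so `L` keeps the inclusion
`K → LT` injective; moreover `ker π₂ ≅ K`. Right exactness applied to `ker π₂ → P → Q` and
`K → LT → LQ` gives a ladder with exact rows `L(ker π₂) → LP → LQ → 1` and `LK ↪ LLT → LLQ`,
joined by `L π₁` and by isomorphisms at both ends; the four lemma, in each of the two group
components, makes `L π₁` bijective.
-/

namespace MonoidHom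

variable {A₁ A₂ A₃ B₁ B₂ B₃ : Type*} [Group A₁] [Group A₂] [Group A₃] [Group B₁] [Group B₂]
  [Group B₃] {a : A₁ →* A₂} {b : A₂ →* A₃} {c : B₁ →* B₂} {d : B₂ →* B₃}
  {θ : A₁ →* B₁} {φ : A₂ →* B₂} {ψ : A₃ →* B₃}

theorem injective_of_comm_ladder (h₁ : ∀ x, φ (a x) = c (θ x)) (h₂ : ∀ x, d (φ x) = ψ (b x))
    (hab : b.ker ≤ a.range) (hc : Function.Injective c) (hθ : Function.Injective θ)
    (hψ : Function.Injective ψ) : Function.Injective φ := by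
  refine (injective_iff_map_eq_one φ).mpr fun w hw => ?_
  have hbw : b w = 1 := hψ (by rw [← h₂, hw, map_one, map_one])
  obtain ⟨y, rfl⟩ := hab hbw
  have hy : y = 1 := hθ (hc (by rw [← h₁, hw, map_one, map_one]))
  rw [hy, map_one]

theorem surjective_of_comm_ladder (h₁ : ∀ x, φ (a x) = c (θ x)) (h₂ : ∀ x, d (φ x) = ψ (b x))
    (hcd : d.ker ≤ c.range) (hb : Function.Surjective b) (hθ : Function.Surjective θ)
    (hψ : Function.Surjective ψ) : Function.Surjective φ := by
  intro z
  obtain ⟨q, hq⟩ := hψ (d z)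
  obtain ⟨p, rfl⟩ := hb q
  have hker : z * (φ p)⁻¹ ∈ d.ker := by
    rw [mem_ker, map_mul, map_inv, h₂, hq, mul_inv_cancel]
  obtain ⟨n, hn⟩ := hcd hker
  obtain ⟨n', rfl⟩ := hθ n
  exact ⟨a n' * p, by rw [map_mul, h₁, hn, inv_mul_cancel_right]⟩

end MonoidHom

namespace XModHom

variable {A B C D : XMod}

theorem comp_assoc (h : XModHom C D) (g : XModHom B C) (f : XModHom A B) :
    comp (comp h g) f = comp h (comp g f) := ext rfl rfl

theorem comp_id (f : XModHom A B) : comp f (id A) = f := ext rfl rfl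

theorem id_comp (f : XModHom A B) : comp (id B) f = f := ext rfl rfl

theorem triv_comp (f : XModHom A B) : comp (triv B C) f = triv A C := ext rfl rfl

theorem congr_f1 {f g : XModHom A B} (h : f = g) (x : A.M) : f.f1 x = g.f1 x := by rw [h]

theorem congr_f2 {f g : XModHom A B} (h : f = g) (x : A.G) : f.f2 x = g.f2 x := by rw [h]

def Injective (f : XModHom A B) : Prop :=
  Function.Injective f.f1 ∧ Function.Injective f.f2

def Exact (f : XModHom A B) (g : XModHom B C) : Prop :=
  f.f1.range = g.f1.ker ∧ f.f2.range = g.f2.ker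

theorem Injective.comp {g : XModHom B C} {f : XModHom A B} (hg : g.Injective)
    (hf : f.Injective) : (comp g f).Injective :=
  ⟨hg.1.comp hf.1, hg.2.comp hf.2⟩

theorem IsIso.cancel_left {f : XModHom B C} (hf : IsIso f) {g g' : XModHom A B}
    (h : comp f g = comp f g') : g = g' := by
  obtain ⟨e, he, -⟩ := hf
  rw [← id_comp g, ← id_comp g', ← he, comp_assoc, comp_assoc, h]

theorem IsIso.cancel_right {f : XModHom A B} (hf : IsIso f) {g g' : XModHom B C}
    (h : comp g f = comp g' f) : g = g' := by
  obtain ⟨e, -, he⟩ := hf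
  rw [← comp_id g, ← comp_id g', ← he, ← comp_assoc, ← comp_assoc, h]

theorem isIso_iff (f : XModHom A B) : IsIso f ↔ f.Injective ∧ RegEpi f := by
  constructor
  · rintro ⟨g, hgf, hfg⟩
    exact ⟨⟨Function.LeftInverse.injective (g := g.f1) (congr_f1 hgf),
        Function.LeftInverse.injective (g := g.f2) (congr_f2 hgf)⟩,
      Function.RightInverse.surjective (g := g.f1) (congr_f1 hfg),
      Function.RightInverse.surjective (g := g.f2) (congr_f2 hfg)⟩
  · rintro ⟨⟨hi1, hi2⟩, hs1, hs2⟩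
    let e1 := MulEquiv.ofBijective f.f1 ⟨hi1, hs1⟩
    let e2 := MulEquiv.ofBijective f.f2 ⟨hi2, hs2⟩
    have hfe1 : ∀ x, f.f1 (e1.symm x) = x := e1.apply_symm_apply
    have hfe2 : ∀ x, f.f2 (e2.symm x) = x := e2.apply_symm_apply
    refine ⟨⟨e1.symm.toMonoidHom, e2.symm.toMonoidHom, fun m => hi2 ?_, fun b m => hi1 ?_⟩,
      ext (MonoidHom.ext e1.symm_apply_apply) (MonoidHom.ext e2.symm_apply_apply),
      ext (MonoidHom.ext hfe1) (MonoidHom.ext hfe2)⟩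
    · change f.f2 (A.d (e1.symm m)) = f.f2 (e2.symm (B.d m))
      rw [← f.comm_d, hfe1, hfe2]
    · change f.f1 (e1.symm (B.act b m)) = f.f1 (A.act (e2.symm b) (e1.symm m))
      rw [hfe1, f.equiv, hfe1, hfe2]

theorem IsIso.injective {f : XModHom A B} (hf : IsIso f) : f.Injective :=
  ((isIso_iff f).mp hf).1

theorem IsIso.regEpi {f : XModHom A B} (hf : IsIso f) : RegEpi f :=
  ((isIso_iff f).mp hf).2

/-- The four lemma in each component. -/
theorem isIso_of_comm_ladder {A₁ A₂ A₃ B₁ B₂ B₃ : XMod} {a : XModHom A₁ A₂}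
    {b : XModHom A₂ A₃} {c : XModHom B₁ B₂} {d : XModHom B₂ B₃} {θ : XModHom A₁ B₁}
    {φ : XModHom A₂ B₂} {ψ : XModHom A₃ B₃} (h₁ : comp φ a = comp c θ)
    (h₂ : comp d φ = comp ψ b) (hab : Exact a b) (hcd : Exact c d) (hb : RegEpi b)
    (hc : c.Injective) (hθ : IsIso θ) (hψ : IsIso ψ) : IsIso φ :=
  (isIso_iff φ).mpr
    ⟨⟨MonoidHom.injective_of_comm_ladder (congr_f1 h₁) (congr_f1 h₂) hab.1.ge hc.1
        hθ.injective.1 hψ.injective.1,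
      MonoidHom.injective_of_comm_ladder (congr_f2 h₁) (congr_f2 h₂) hab.2.ge hc.2
        hθ.injective.2 hψ.injective.2⟩,
     MonoidHom.surjective_of_comm_ladder (congr_f1 h₁) (congr_f1 h₂) hcd.1.ge hb.1
        hθ.regEpi.1 hψ.regEpi.1,
     MonoidHom.surjective_of_comm_ladder (congr_f2 h₁) (congr_f2 h₂) hcd.2.ge hb.2
        hθ.regEpi.2 hψ.regEpi.2⟩

theorem IsKernelOf.cancel_left {N T Q : XMod} {κ : XModHom N T} {α : XModHom T Q}
    (hκ : IsKernelOf κ α) {g g' : XModHom A N} (h : comp κ g = comp κ g') : g = g' := by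
  have hα : comp α (comp κ g') = triv A Q := by rw [← comp_assoc, hκ.1, triv_comp]
  exact (hκ.2 A _ hα).unique h rfl

end XModHom

open XModHom

theorem isPullbackSquare_of_isIso {P X Y Z : XMod} {p₁ : XModHom P X} {p₂ : XModHom P Y}
    {f : XModHom X Z} {h : XModHom Y Z} (hsq : comp f p₁ = comp h p₂) (hp₁ : IsIso p₁)
    (hh : IsIso h) : IsPullbackSquare p₁ p₂ f h := by
  obtain ⟨q, hqp, hpq⟩ := hp₁
  refine ⟨hsq, fun W u v huv => ⟨comp q u, ⟨?_, hh.cancel_left ?_⟩, fun w hw => ?_⟩⟩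
  · rw [← comp_assoc, hpq, id_comp]
  · rw [← huv, ← comp_assoc, ← hsq, comp_assoc, ← comp_assoc p₁, hpq, id_comp]
  · rw [← hw.1, ← comp_assoc, hqp, id_comp]

theorem kerIncl_isKernel {N T : XMod} (f : XModHom N T) : IsKernelOf (kerIncl f) f := by
  refine ⟨ext (MonoidHom.ext fun n => n.2) (MonoidHom.ext fun n => n.2), fun X u hu => ?_⟩
  refine ⟨⟨u.f1.codRestrict f.f1.ker (congr_f1 hu), u.f2.codRestrict f.f2.ker (congr_f2 hu),
    fun n => Subtype.ext (u.comm_d n), fun b n => Subtype.ext (u.equiv b n)⟩, rfl,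
    fun v hv => ?_⟩
  subst hv
  rfl

theorem kerIncl_injective {N T : XMod} (f : XModHom N T) : (kerIncl f).Injective :=
  ⟨Subtype.val_injective, Subtype.val_injective⟩

section Pullback

variable {T Q Q' : XMod} (α : XModHom T Q) (g : XModHom Q' Q)

theorem pb_condition : comp α (pbFst α g) = comp g (pbSnd α g) :=
  ext (MonoidHom.ext fun x => x.2) (MonoidHom.ext fun x => x.2)

theorem pbSnd_regEpi (hα : RegEpi α) : RegEpi (pbSnd α g) := by
  constructor
  · intro m
    obtain ⟨t, ht⟩ := hα.1 (g.f1 m)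
    exact ⟨⟨(t, m), ht⟩, rfl⟩
  · intro b
    obtain ⟨t, ht⟩ := hα.2 (g.f2 b)
    exact ⟨⟨(t, b), ht⟩, rfl⟩

theorem pbFst_f1_mem_ker {x : (pbXMod α g).M} (hx : x ∈ (pbSnd α g).f1.ker) :
    (pbFst α g).f1 x ∈ α.f1.ker := by
  change α.f1 x.1.1 = 1
  rw [x.2, show x.1.2 = 1 from hx, map_one]

theorem pbFst_f2_mem_ker {x : (pbXMod α g).G} (hx : x ∈ (pbSnd α g).f2.ker) :
    (pbFst α g).f2 x ∈ α.f2.ker := by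
  change α.f2 x.1.1 = 1
  rw [x.2, show x.1.2 = 1 from hx, map_one]

def pbKerToKer : XModHom (kerXMod (pbSnd α g)) (kerXMod α) where
  f1 := ((pbFst α g).f1.comp (kerIncl _).f1).codRestrict _ fun x => pbFst_f1_mem_ker α g x.2
  f2 := ((pbFst α g).f2.comp (kerIncl _).f2).codRestrict _ fun x => pbFst_f2_mem_ker α g x.2
  comm_d _ := rfl
  equiv _ _ := rfl

theorem pb_ker_square :
    comp (pbFst α g) (kerIncl (pbSnd α g)) = comp (kerIncl α) (pbKerToKer α g) :=
  ext rfl rfl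

theorem pbKerToKer_isIso : IsIso (pbKerToKer α g) := by
  refine (isIso_iff _).mpr ⟨⟨fun x y hxy => ?_, fun x y hxy => ?_⟩, fun t => ?_, fun t => ?_⟩
  · exact Subtype.ext (Subtype.ext (Prod.ext (congrArg Subtype.val hxy) (x.2.trans y.2.symm)))
  · exact Subtype.ext (Subtype.ext (Prod.ext (congrArg Subtype.val hxy) (x.2.trans y.2.symm)))
  · refine ⟨⟨⟨(t.1, 1), ?_⟩, rfl⟩, rfl⟩
    change α.f1 t.1 = g.f1 1
    rw [map_one]
    exact t.2
  · refine ⟨⟨⟨(t.1, 1), ?_⟩, rfl⟩, rfl⟩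
    change α.f2 t.1 = g.f2 1
    rw [map_one]
    exact t.2

end Pullback

namespace LocalizationFunctor

variable (L : LocalizationFunctor)

theorem map_isIso {A B : XMod} {f : XModHom A B} (hf : IsIso f) : IsIso (L.map f) := by
  obtain ⟨g, hgf, hfg⟩ := hf
  exact ⟨L.map g, by rw [← L.map_comp, hgf, L.map_id], by rw [← L.map_comp, hfg, L.map_id]⟩

theorem isLocal_obj (A : XMod) : L.IsLocal (L.obj A) := L.iso_ell_obj A

variable {L}

theorem hom_ext_of_isLocal {A Y : XMod} (hY : L.IsLocal Y) {g g' : XModHom (L.obj A) Y}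
    (h : comp g (L.ell A) = comp g' (L.ell A)) : g = g' := by
  have hL : L.map g = L.map g' :=
    (L.iso_map_ell A).cancel_right (by rw [← L.map_comp, ← L.map_comp, h])
  refine hY.cancel_left ?_
  rw [L.natural g, L.natural g', hL]

theorem isLocal_of_isKernelOf {N X Y : XMod} {κ : XModHom N X} {α : XModHom X Y}
    (hκ : IsKernelOf κ α) (hX : L.IsLocal X) (hY : L.IsLocal Y) : L.IsLocal N := by
  obtain ⟨e, heℓ, -⟩ := hX
  have hnat : comp e (comp (L.map κ) (L.ell N)) = κ := by
    rw [← L.natural κ, ← comp_assoc, heℓ, id_comp]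
  have htriv : comp α (comp e (L.map κ)) = triv (L.obj N) Y :=
    hom_ext_of_isLocal hY (by rw [comp_assoc, comp_assoc, hnat, hκ.1, triv_comp])
  obtain ⟨r, hr, -⟩ := hκ.2 _ _ htriv
  have hrℓ : comp r (L.ell N) = XModHom.id N :=
    hκ.cancel_left (by rw [← comp_assoc, hr, comp_assoc, hnat, comp_id])
  refine ⟨r, hrℓ, hom_ext_of_isLocal (L.isLocal_obj N) ?_⟩
  rw [comp_assoc, hrℓ, comp_id, id_comp]

/-- Between local objects, `L f` is conjugate to `f` by the coaugmentations. -/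
theorem map_injective {A B : XMod} (hA : L.IsLocal A) (hB : L.IsLocal B) {f : XModHom A B}
    (hf : f.Injective) : (L.map f).Injective := by
  obtain ⟨e, heℓ, hℓe⟩ := hA
  have hLf : L.map f = comp (L.ell B) (comp f e) := by
    rw [← comp_assoc, L.natural f, comp_assoc, hℓe, comp_id]
  rw [hLf]
  exact hB.injective.comp (hf.comp (IsIso.injective ⟨L.ell A, hℓe, heℓ⟩))

end LocalizationFunctor

open LocalizationFunctor in
/-- A localization functor on `XMod` that is right exact (it
sends every short exact sequence `1 → N →(κ) T →(α) Q → 1` to an exact sequence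
`LN →(Lκ) LT →(Lα) LQ → 1`, i.e. `Lα` is a regular epimorphism and the image of
`Lκ` is a kernel of `Lα`, componentwise) is admissible for the class of regular
epimorphisms. -/
theorem right_exact_admissible (L : LocalizationFunctor)
    (hre : ∀ (N T Q : XMod) (κ : XModHom N T) (α : XModHom T Q),
      ShortExact κ α →
        XModHom.RegEpi (L.map α) ∧
        (L.map κ).f1.range = (L.map α).f1.ker ∧
        (L.map κ).f2.range = (L.map α).f2.ker) :
    L.Admissible := by
  intro T Q α hα
  obtain ⟨hπ₂, hexP⟩ := hre _ _ _ _ _ ⟨kerIncl_isKernel _, pbSnd_regEpi α (L.ell Q) hα⟩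
  obtain ⟨-, hexT⟩ := hre _ _ _ _ _ ⟨kerIncl_isKernel α, hα⟩
  have hker : L.IsLocal (kerXMod α) :=
    isLocal_of_isKernelOf (kerIncl_isKernel α) (L.isLocal_obj T) (L.isLocal_obj Q)
  have hκ : (L.map (kerIncl α)).Injective :=
    map_injective hker (L.isLocal_obj T) (kerIncl_injective α)
  have hπ₁ : IsIso (L.map (pbFst α (L.ell Q))) :=
    isIso_of_comm_ladder (by rw [← L.map_comp, ← L.map_comp, pb_ker_square])
      (by rw [← L.map_comp, ← L.map_comp, pb_condition]) hexP hexT hπ₂ hκ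
      (L.map_isIso (pbKerToKer_isIso α (L.ell Q))) (L.iso_map_ell Q)
  exact isPullbackSquare_of_isIso (by rw [← L.map_comp, ← L.map_comp, pb_condition]) hπ₁
    (L.iso_map_ell Q)
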